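/- Let (Θ, Θ̄) be a twist for a weak Hopf algebra H over a field k. Then the element v = S(Θ⁽¹⁾)Θ⁽²⁾ is invertible in H with inverse Θ̄⁽¹⁾S(Θ̄⁽²⁾); that is, Θ̄⁽¹⁾S(Θ̄⁽²⁾)·S(Θ⁽¹⁾)Θ⁽²⁾ = 1 and S(Θ⁽¹⁾)Θ⁽²⁾·Θ̄⁽¹⁾S(Θ̄⁽²⁾) = 1. -/

import Mathlib

open TensorProduct

noncomputable section

namespace WHA

variable (k B : Type*) [Field k] [Ring B] [Algebra k B]

/-- `x ↦ x ⊗ 1`, the embedding of `B ⊗ B` into legs 1,2 of `B ⊗ B ⊗ B`. -/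
def leg12 : B ⊗[k] B →ₗ[k] B ⊗[k] (B ⊗[k] B) :=
  (TensorProduct.assoc k B B B).toLinearMap ∘ₗ (TensorProduct.mk k (B ⊗[k] B) B).flip 1

/-- `x ↦ 1 ⊗ x`, the embedding of `B ⊗ B` into legs 2,3 of `B ⊗ B ⊗ B`. -/
def leg23 : B ⊗[k] B →ₗ[k] B ⊗[k] (B ⊗[k] B) :=
  TensorProduct.mk k B (B ⊗[k] B) 1

/-- `a ⊗ b ↦ a ⊗ 1 ⊗ b`, the embedding of `B ⊗ B` into legs 1,3 of `B ⊗ B ⊗ B`. -/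
def leg13 : B ⊗[k] B →ₗ[k] B ⊗[k] (B ⊗[k] B) :=
  TensorProduct.map LinearMap.id (TensorProduct.mk k B B 1)

/-- `Δ ⊗ id`, landing in the right-associated triple tensor product. -/
def ext12 (Δ : B →ₗ[k] B ⊗[k] B) : B ⊗[k] B →ₗ[k] B ⊗[k] (B ⊗[k] B) :=
  (TensorProduct.assoc k B B B).toLinearMap ∘ₗ TensorProduct.map Δ LinearMap.id

/-- `id ⊗ Δ`. -/
def ext23 (Δ : B →ₗ[k] B ⊗[k] B) : B ⊗[k] B →ₗ[k] B ⊗[k] (B ⊗[k] B) :=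
  TensorProduct.map LinearMap.id Δ

/-- `(ε ⊗ id)` composed with the canonical isomorphism `k ⊗ B ≅ B`. -/
def epsL (ε : B →ₗ[k] k) : B ⊗[k] B →ₗ[k] B :=
  (TensorProduct.lid k B).toLinearMap ∘ₗ TensorProduct.map ε LinearMap.id

/-- `(id ⊗ ε)` composed with the canonical isomorphism `B ⊗ k ≅ B`. -/
def epsR (ε : B →ₗ[k] k) : B ⊗[k] B →ₗ[k] B :=
  (TensorProduct.rid k B).toLinearMap ∘ₗ TensorProduct.map LinearMap.id ε

/-- Pairing of two linear functionals against an element of `B ⊗ B`. -/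
def pairF (φ ψ : B →ₗ[k] k) : B ⊗[k] B →ₗ[k] k :=
  (TensorProduct.lid k k).toLinearMap ∘ₗ TensorProduct.map φ ψ

/-- The multiplication map `B ⊗ B → B`. -/
def mul2 : B ⊗[k] B →ₗ[k] B := LinearMap.mul' k B

/-- A weak Hopf algebra structure on the `k`-algebra `B`. -/
structure WeakHopf where
  Δ : B →ₗ[k] B ⊗[k] B
  ε : B →ₗ[k] k
  S : B →ₗ[k] B
  comul_mul : ∀ g h : B, Δ (g * h) = Δ g * Δ h
  coassoc : ∀ h : B, ext12 k B Δ (Δ h) = ext23 k B Δ (Δ h)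
  counit_left : ∀ h : B, epsL k B ε (Δ h) = h
  counit_right : ∀ h : B, epsR k B ε (Δ h) = h
  eps_weak₁ : ∀ g h f : B, ε (g * h * f) =
    pairF k B (ε ∘ₗ LinearMap.mulLeft k g) (ε ∘ₗ LinearMap.mulRight k f) (Δ h)
  eps_weak₂ : ∀ g h f : B, ε (g * h * f) =
    pairF k B (ε ∘ₗ LinearMap.mulRight k f) (ε ∘ₗ LinearMap.mulLeft k g) (Δ h)
  delta_one₁ : ext12 k B Δ (Δ 1) = leg12 k B (Δ 1) * leg23 k B (Δ 1)
  delta_one₂ : ext12 k B Δ (Δ 1) = leg23 k B (Δ 1) * leg12 k B (Δ 1)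
  antipode₁ : ∀ h : B,
    mul2 k B (TensorProduct.map LinearMap.id S (Δ h)) = epsL k B ε (Δ 1 * (h ⊗ₜ[k] 1))
  antipode₂ : ∀ h : B,
    mul2 k B (TensorProduct.map S LinearMap.id (Δ h)) = epsR k B ε (((1 : B) ⊗ₜ[k] h) * Δ 1)
  antipode₃ : ∀ h : B,
    mul2 k B (TensorProduct.map S (mul2 k B ∘ₗ TensorProduct.map LinearMap.id S)
      (ext23 k B Δ (Δ h))) = S h

variable {k B}

/-- The target counital map `ε_t`. -/
def WeakHopf.εt (W : WeakHopf k B) : B →ₗ[k] B :=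
  epsL k B W.ε ∘ₗ LinearMap.mulLeft k (W.Δ 1) ∘ₗ (TensorProduct.mk k B B).flip 1

/-- The source counital map `ε_s`. -/
def WeakHopf.εs (W : WeakHopf k B) : B →ₗ[k] B :=
  epsR k B W.ε ∘ₗ LinearMap.mulRight k (W.Δ 1) ∘ₗ TensorProduct.mk k B B 1

variable (k B)

/-- A twist for a weak Hopf algebra. -/
structure Twist (W : WeakHopf k B) where
  Θ : B ⊗[k] B
  Θbar : B ⊗[k] B
  idem_left : Θ = W.Δ 1 * Θ
  idem_right : Θbar = Θbar * W.Δ 1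
  prod_eq : Θ * Θbar = W.Δ 1
  counit₁ : epsL k B W.ε Θ = 1
  counit₂ : epsR k B W.ε Θ = 1
  counit₃ : epsL k B W.ε Θbar = 1
  counit₄ : epsR k B W.ε Θbar = 1
  cocycle₁ : ext12 k B W.Δ Θ * leg12 k B Θ = ext23 k B W.Δ Θ * leg23 k B Θ
  cocycle₂ : leg12 k B Θbar * ext12 k B W.Δ Θbar = leg23 k B Θbar * ext23 k B W.Δ Θbar
  cocycle₃ : ext12 k B W.Δ Θbar * ext23 k B W.Δ Θ = leg12 k B Θ * leg23 k B Θbar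
  cocycle₄ : ext23 k B W.Δ Θbar * ext12 k B W.Δ Θ = leg23 k B Θ * leg12 k B Θbar

end WHA

/-!
Write `x₍₁₎ ⊗ x₍₂₎` for `Δ x`. The argument rests on standard facts about the antipode of a weak
Hopf algebra (Böhm–Nill–Szlachányi): `S` is anti-multiplicative and `S 1 = 1`, the images of
`ε_t` and `ε_s` commute, and `ε_t x = S(1₍₁₎ ε(1₍₂₎ x))`, `ε_s x = S(ε(x 1₍₁₎) 1₍₂₎)`.

For the twist, `Θ̄⁽¹⁾S(Θ̄⁽²⁾) · S(Θ⁽¹⁾)Θ⁽²⁾` is the image of `(1 ⊗ Θ)(Θ̄ ⊗ 1)` under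
`a ⊗ b ⊗ c ↦ a S(b) c`. By the cocycle identity this is the image of `(id ⊗ Δ)(Θ̄)(Δ ⊗ id)(Θ)`,
which collapses to `Θ̄⁽¹⁾ε_s(Θ̄⁽²⁾) · ε_t(Θ⁽¹⁾)Θ⁽²⁾ = (id ⊗ ε)(Θ̄Δ(1)) · (ε ⊗ id)(Δ(1)Θ) = 1`.
Symmetrically, `S(Θ⁽¹⁾)Θ⁽²⁾ · Θ̄⁽¹⁾S(Θ̄⁽²⁾)` is the image of `(Θ ⊗ 1)(1 ⊗ Θ̄)` under
`a ⊗ b ⊗ c ↦ S(a) b S(c)`, and the other cocycle identity turns it into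
`S(Θ⁽¹⁾)ε_t(Θ⁽²⁾) · ε_s(Θ̄⁽¹⁾)S(Θ̄⁽²⁾) = S((id ⊗ ε)(Δ(1)Θ)) · S((ε ⊗ id)(Θ̄Δ(1))) = 1`.
-/

namespace WHA

variable {k B : Type*} [Field k] [Ring B] [Algebra k B]

section TensorCalculus

@[simp] lemma mul2_tmul (x y : B) : mul2 k B (x ⊗ₜ[k] y) = x * y := rfl
@[simp] lemma leg12_tmul (x y : B) : leg12 k B (x ⊗ₜ[k] y) = x ⊗ₜ[k] (y ⊗ₜ[k] 1) := rfl
@[simp] lemma leg23_apply (t : B ⊗[k] B) : leg23 k B t = (1 : B) ⊗ₜ[k] t := rfl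
@[simp] lemma ext12_tmul (Δ : B →ₗ[k] B ⊗[k] B) (x y : B) :
    ext12 k B Δ (x ⊗ₜ[k] y) = TensorProduct.assoc k B B B (Δ x ⊗ₜ[k] y) := rfl
@[simp] lemma ext23_tmul (Δ : B →ₗ[k] B ⊗[k] B) (x y : B) :
    ext23 k B Δ (x ⊗ₜ[k] y) = x ⊗ₜ[k] Δ y := rfl
@[simp] lemma epsL_tmul (ε : B →ₗ[k] k) (x y : B) : epsL k B ε (x ⊗ₜ[k] y) = ε x • y := rfl
@[simp] lemma epsR_tmul (ε : B →ₗ[k] k) (x y : B) : epsR k B ε (x ⊗ₜ[k] y) = ε y • x := rfl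
@[simp] lemma pairF_tmul (φ ψ : B →ₗ[k] k) (x y : B) :
    pairF k B φ ψ (x ⊗ₜ[k] y) = φ x * ψ y := by
  simp [pairF]

lemma leg12_eq_assoc (t : B ⊗[k] B) :
    leg12 k B t = TensorProduct.assoc k B B B (t ⊗ₜ[k] 1) := rfl

lemma leg12_mul (u v : B ⊗[k] B) : leg12 k B (u * v) = leg12 k B u * leg12 k B v := by
  induction u using TensorProduct.induction_on with
  | zero => simp
  | add a b ha hb => simp [add_mul, ha, hb]
  | tmul x y =>
    induction v using TensorProduct.induction_on with
    | zero => simp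
    | add a b ha hb => simp [mul_add, ha, hb]
    | tmul z w => simp

lemma assoc_mul_tmul_mul (u v : B ⊗[k] B) (y w : B) :
    TensorProduct.assoc k B B B ((u * v) ⊗ₜ[k] (y * w)) =
      TensorProduct.assoc k B B B (u ⊗ₜ[k] y) * TensorProduct.assoc k B B B (v ⊗ₜ[k] w) := by
  induction u using TensorProduct.induction_on with
  | zero => simp
  | add a b ha hb => simp [add_mul, add_tmul, ha, hb]
  | tmul p q =>
    induction v using TensorProduct.induction_on with
    | zero => simp
    | add a b ha hb => simp [mul_add, add_tmul, ha, hb]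
    | tmul r s => simp

lemma ext12_mul {Δ : B →ₗ[k] B ⊗[k] B} (hΔ : ∀ g h, Δ (g * h) = Δ g * Δ h)
    (u v : B ⊗[k] B) : ext12 k B Δ (u * v) = ext12 k B Δ u * ext12 k B Δ v := by
  induction u using TensorProduct.induction_on with
  | zero => simp
  | add a b ha hb => simp [add_mul, ha, hb]
  | tmul x y =>
    induction v using TensorProduct.induction_on with
    | zero => simp
    | add a b ha hb => simp [mul_add, ha, hb]
    | tmul z w =>
      simp only [Algebra.TensorProduct.tmul_mul_tmul, ext12_tmul, hΔ, assoc_mul_tmul_mul]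

lemma ext23_mul {Δ : B →ₗ[k] B ⊗[k] B} (hΔ : ∀ g h, Δ (g * h) = Δ g * Δ h)
    (u v : B ⊗[k] B) : ext23 k B Δ (u * v) = ext23 k B Δ u * ext23 k B Δ v := by
  induction u using TensorProduct.induction_on with
  | zero => simp
  | add a b ha hb => simp [add_mul, ha, hb]
  | tmul x y =>
    induction v using TensorProduct.induction_on with
    | zero => simp
    | add a b ha hb => simp [mul_add, ha, hb]
    | tmul z w => simp [hΔ]

def mul3 (f g h : B →ₗ[k] B) : B ⊗[k] (B ⊗[k] B) →ₗ[k] B :=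
  mul2 k B ∘ₗ map f (mul2 k B ∘ₗ map g h)

@[simp] lemma mul3_tmul (f g h : B →ₗ[k] B) (a b c : B) :
    mul3 f g h (a ⊗ₜ[k] (b ⊗ₜ[k] c)) = f a * (g b * h c) := rfl

lemma mul3_tmul_left (f g h : B →ₗ[k] B) (a : B) (q : B ⊗[k] B) :
    mul3 f g h (a ⊗ₜ[k] q) = f a * mul2 k B (map g h q) := rfl

lemma mul3_assoc_tmul (f g h : B →ₗ[k] B) (p : B ⊗[k] B) (c : B) :
    mul3 f g h (TensorProduct.assoc k B B B (p ⊗ₜ[k] c)) = mul2 k B (map f g p) * h c := by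
  induction p using TensorProduct.induction_on with
  | zero => simp
  | add a b ha hb => simp only [add_tmul, map_add, ha, hb, add_mul]
  | tmul a b => simp [mul_assoc]

lemma mul2_map_mul_one_tmul (f : B →ₗ[k] B) (t : B ⊗[k] B) (z : B) :
    mul2 k B (map f LinearMap.id (t * (1 ⊗ₜ[k] z))) = mul2 k B (map f LinearMap.id t) * z := by
  induction t using TensorProduct.induction_on with
  | zero => simp
  | add p q hp hq => simp [add_mul, hp, hq]
  | tmul a b => simp [mul_assoc]

lemma mul2_map_tmul_one_mul (g : B →ₗ[k] B) (e : B) (t : B ⊗[k] B) :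
    mul2 k B (map LinearMap.id g ((e ⊗ₜ[k] 1) * t)) = e * mul2 k B (map LinearMap.id g t) := by
  induction t using TensorProduct.induction_on with
  | zero => simp
  | add p q hp hq => simp [mul_add, hp, hq]
  | tmul a b => simp [mul_assoc]

lemma map_id_mul2_assoc_tmul (g : B →ₗ[k] B) (q : B ⊗[k] B) (y : B) :
    map LinearMap.id (mul2 k B ∘ₗ map LinearMap.id g) (TensorProduct.assoc k B B B (q ⊗ₜ[k] y)) =
      q * (1 ⊗ₜ[k] g y) := by
  induction q using TensorProduct.induction_on with
  | zero => simp
  | add p r hp hr => simp [add_tmul, hp, hr, add_mul]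
  | tmul a b => simp

end TensorCalculus

section Contractions

variable (ε φ : B →ₗ[k] k) (a x y : B) (u : B ⊗[k] B)

lemma epsL_mul_tmul :
    epsL k B φ (u * (x ⊗ₜ[k] y)) = epsL k B (φ ∘ₗ LinearMap.mulRight k x) u * y := by
  induction u using TensorProduct.induction_on with
  | zero => simp
  | add p q hp hq => simp [add_mul, hp, hq]
  | tmul c d => simp

lemma epsL_tmul_mul :
    epsL k B φ ((x ⊗ₜ[k] y) * u) = y * epsL k B (φ ∘ₗ LinearMap.mulLeft k x) u := by
  induction u using TensorProduct.induction_on with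
  | zero => simp
  | add p q hp hq => simp [mul_add, hp, hq]
  | tmul c d => simp

lemma epsR_mul_tmul :
    epsR k B φ (u * (x ⊗ₜ[k] y)) = epsR k B (φ ∘ₗ LinearMap.mulRight k y) u * x := by
  induction u using TensorProduct.induction_on with
  | zero => simp
  | add p q hp hq => simp [add_mul, hp, hq]
  | tmul c d => simp

lemma epsR_tmul_mul :
    epsR k B φ ((x ⊗ₜ[k] y) * u) = x * epsR k B (φ ∘ₗ LinearMap.mulLeft k y) u := by
  induction u using TensorProduct.induction_on with
  | zero => simp
  | add p q hp hq => simp [mul_add, hp, hq]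
  | tmul c d => simp

lemma apply_mul_epsL : ε (a * epsL k B φ u) = pairF k B φ (ε ∘ₗ LinearMap.mulLeft k a) u := by
  induction u using TensorProduct.induction_on with
  | zero => simp
  | add p q hp hq => simp [mul_add, hp, hq]
  | tmul c d => simp [mul_comm]

lemma apply_epsL_mul : ε (epsL k B φ u * a) = pairF k B φ (ε ∘ₗ LinearMap.mulRight k a) u := by
  induction u using TensorProduct.induction_on with
  | zero => simp
  | add p q hp hq => simp [add_mul, hp, hq]
  | tmul c d => simp

lemma apply_mul_epsR : ε (a * epsR k B φ u) = pairF k B (ε ∘ₗ LinearMap.mulLeft k a) φ u := by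
  induction u using TensorProduct.induction_on with
  | zero => simp
  | add p q hp hq => simp [mul_add, hp, hq]
  | tmul c d => simp [mul_comm]

lemma apply_epsR_mul : ε (epsR k B φ u * a) = pairF k B (ε ∘ₗ LinearMap.mulRight k a) φ u := by
  induction u using TensorProduct.induction_on with
  | zero => simp
  | add p q hp hq => simp [add_mul, hp, hq]
  | tmul c d => simp [mul_comm]

end Contractions

namespace WeakHopf

variable (W : WeakHopf k B)

section Counital

lemma comul_one_mul (x : B) : W.Δ 1 * W.Δ x = W.Δ x := by rw [← W.comul_mul, one_mul]

lemma comul_mul_one (x : B) : W.Δ x * W.Δ 1 = W.Δ x := by rw [← W.comul_mul, mul_one]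

lemma mul2_map_id_S_comul (h : B) :
    mul2 k B (map LinearMap.id W.S (W.Δ h)) = W.εt h := W.antipode₁ h

lemma mul2_map_S_id_comul (h : B) :
    mul2 k B (map W.S LinearMap.id (W.Δ h)) = W.εs h := W.antipode₂ h

lemma εt_eq_epsL (x : B) : W.εt x = epsL k B (W.ε ∘ₗ LinearMap.mulRight k x) (W.Δ 1) :=
  (epsL_mul_tmul _ _ _ _).trans (mul_one _)

lemma εs_eq_epsR (x : B) : W.εs x = epsR k B (W.ε ∘ₗ LinearMap.mulLeft k x) (W.Δ 1) :=
  (epsR_tmul_mul _ _ _ _).trans (one_mul _)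

/-- `ε̄_s x = 1₍₁₎ ε(1₍₂₎ x)`. -/
def εsBar (x : B) : B := epsR k B (W.ε ∘ₗ LinearMap.mulRight k x) (W.Δ 1)

/-- `ε̄_t x = ε(x 1₍₁₎) 1₍₂₎`. -/
def εtBar (x : B) : B := epsL k B (W.ε ∘ₗ LinearMap.mulLeft k x) (W.Δ 1)

lemma counit_mul_εt (a h : B) : W.ε (a * W.εt h) = W.ε (a * h) := by
  rw [εt_eq_epsL, apply_mul_epsL, ← mul_one a, ← W.eps_weak₂, mul_one, mul_one]

lemma counit_εs_mul (h a : B) : W.ε (W.εs h * a) = W.ε (h * a) := by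
  rw [εs_eq_epsR, apply_epsR_mul, ← W.eps_weak₂, mul_one]

lemma counit_mul_εsBar (a x : B) : W.ε (a * W.εsBar x) = W.ε (a * x) := by
  rw [εsBar, apply_mul_epsR, ← W.eps_weak₁, mul_one]

lemma counit_εtBar_mul (x a : B) : W.ε (W.εtBar x * a) = W.ε (x * a) := by
  rw [εtBar, apply_epsL_mul, ← W.eps_weak₁, mul_one]

lemma εt_congr {x y : B} (h : ∀ a, W.ε (a * x) = W.ε (a * y)) : W.εt x = W.εt y := by
  rw [εt_eq_epsL, εt_eq_epsL,
    show W.ε ∘ₗ LinearMap.mulRight k x = W.ε ∘ₗ LinearMap.mulRight k y from LinearMap.ext h]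

lemma εs_congr {x y : B} (h : ∀ a, W.ε (x * a) = W.ε (y * a)) : W.εs x = W.εs y := by
  rw [εs_eq_epsR, εs_eq_epsR,
    show W.ε ∘ₗ LinearMap.mulLeft k x = W.ε ∘ₗ LinearMap.mulLeft k y from LinearMap.ext h]

lemma εt_mul_εt (g h : B) : W.εt (g * W.εt h) = W.εt (g * h) :=
  W.εt_congr fun a => by rw [← mul_assoc, counit_mul_εt, mul_assoc]

lemma εs_εs_mul (h g : B) : W.εs (W.εs h * g) = W.εs (h * g) :=
  W.εs_congr fun a => by rw [mul_assoc, counit_εs_mul, mul_assoc]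

lemma εt_εsBar (x : B) : W.εt (W.εsBar x) = W.εt x := W.εt_congr (W.counit_mul_εsBar · x)

lemma εs_εtBar (x : B) : W.εs (W.εtBar x) = W.εs x := W.εs_congr (W.counit_εtBar_mul x)

lemma εs_one : W.εs 1 = 1 := by
  show epsR k B W.ε ((1 ⊗ₜ[k] 1) * W.Δ 1) = 1
  rw [← Algebra.TensorProduct.one_def, one_mul, W.counit_right]

lemma comul_εt (h : B) : W.Δ (W.εt h) = W.Δ 1 * (W.εt h ⊗ₜ[k] 1) := by
  set φ := W.ε ∘ₗ LinearMap.mulRight k h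
  let κ : B ⊗[k] (B ⊗[k] B) →ₗ[k] B ⊗[k] B :=
    (TensorProduct.lid k (B ⊗[k] B)).toLinearMap ∘ₗ map φ LinearMap.id
  have comul_epsL : ∀ t, W.Δ (epsL k B φ t) = κ (ext23 k B W.Δ t) := by
    intro t
    induction t using TensorProduct.induction_on with
    | zero => simp
    | add u v hu hv => simp [hu, hv]
    | tmul x y => simp [κ]
  have κ_leg23_mul_leg12 :
      ∀ u t, κ (leg23 k B u * leg12 k B t) = u * (epsL k B φ t ⊗ₜ[k] 1) := by
    intro u t
    induction t using TensorProduct.induction_on with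
    | zero => simp
    | add a b ha hb => simp only [map_add, mul_add, add_tmul, ha, hb]
    | tmul x y => simp [κ, ← smul_tmul']
  rw [εt_eq_epsL, comul_epsL, ← W.coassoc, W.delta_one₂, κ_leg23_mul_leg12]

lemma comul_εs (h : B) : W.Δ (W.εs h) = (1 ⊗ₜ[k] W.εs h) * W.Δ 1 := by
  set ψ := W.ε ∘ₗ LinearMap.mulLeft k h
  let κ : B ⊗[k] (B ⊗[k] B) →ₗ[k] B ⊗[k] B := map LinearMap.id (epsR k B ψ)
  have κ_assoc : ∀ p y, κ (TensorProduct.assoc k B B B (p ⊗ₜ[k] y)) = ψ y • p := by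
    intro p y
    induction p using TensorProduct.induction_on with
    | zero => simp
    | add a b ha hb => simp only [add_tmul, map_add, ha, hb, smul_add]
    | tmul a b => simp [κ, tmul_smul]
  have comul_epsR : ∀ t, W.Δ (epsR k B ψ t) = κ (ext12 k B W.Δ t) := by
    intro t
    induction t using TensorProduct.induction_on with
    | zero => simp
    | add u v hu hv => simp [hu, hv]
    | tmul x y => simp [κ_assoc]
  have κ_leg23_mul_leg12 :
      ∀ u t, κ (leg23 k B u * leg12 k B t) = (1 ⊗ₜ[k] epsR k B ψ u) * t := by
    intro u t
    induction t using TensorProduct.induction_on with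
    | zero => simp
    | add a b ha hb => simp only [map_add, mul_add, ha, hb]
    | tmul x y =>
      induction u using TensorProduct.induction_on with
      | zero => simp
      | add a b ha hb => simp only [map_add, add_mul, tmul_add, ha, hb]
      | tmul a b => simp [κ]
  rw [εs_eq_epsR, comul_epsR, W.delta_one₂, κ_leg23_mul_leg12]

lemma εt_mul_eq (g h : B) :
    W.εt (g * h) = mul2 k B (map LinearMap.id W.S (W.Δ g * (W.εt h ⊗ₜ[k] 1))) := by
  rw [← εt_mul_εt, ← mul2_map_id_S_comul, W.comul_mul, comul_εt, ← mul_assoc, comul_mul_one]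

lemma εs_mul_eq (h g : B) :
    W.εs (h * g) = mul2 k B (map W.S LinearMap.id ((1 ⊗ₜ[k] W.εs h) * W.Δ g)) := by
  rw [← εs_εs_mul, ← mul2_map_S_id_comul, W.comul_mul, comul_εs, mul_assoc, comul_one_mul]

lemma map_id_epsL_ext12 (t : B ⊗[k] B) :
    map LinearMap.id (epsL k B W.ε) (ext12 k B W.Δ t) = t := by
  have map_assoc_tmul : ∀ (p : B ⊗[k] B) y,
      map LinearMap.id (epsL k B W.ε) (TensorProduct.assoc k B B B (p ⊗ₜ[k] y)) =
        epsR k B W.ε p ⊗ₜ[k] y := by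
    intro p y
    induction p using TensorProduct.induction_on with
    | zero => simp
    | add a b ha hb => simp [add_tmul, ha, hb]
    | tmul x z => simp [tmul_smul, smul_tmul']
  induction t using TensorProduct.induction_on with
  | zero => simp
  | add a b ha hb => simp [ha, hb]
  | tmul x y => simp [map_assoc_tmul, W.counit_right]

lemma map_id_epsL_ext23 (t : B ⊗[k] B) :
    map LinearMap.id (epsL k B W.ε) (ext23 k B W.Δ t) = t := by
  induction t using TensorProduct.induction_on with
  | zero => simp
  | add a b ha hb => simp [ha, hb]
  | tmul x y => simp [W.counit_left]

lemma map_id_εt_comul (h : B) : map LinearMap.id W.εt (W.Δ h) = W.Δ 1 * (h ⊗ₜ[k] 1) := by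
  have contract : ∀ t, map LinearMap.id W.εt t =
      map LinearMap.id (epsL k B W.ε) (leg23 k B (W.Δ 1) * leg12 k B t) := by
    intro t
    induction t using TensorProduct.induction_on with
    | zero => simp
    | add a b ha hb => simp [mul_add, ha, hb]
    | tmul x y =>
      simp only [leg23_apply, leg12_tmul, Algebra.TensorProduct.tmul_mul_tmul, one_mul, map_tmul]
      rfl
  have ext12_eq :
      ext12 k B W.Δ (W.Δ 1 * (h ⊗ₜ[k] 1)) = leg23 k B (W.Δ 1) * leg12 k B (W.Δ h) := by
    have : ext12 k B W.Δ (h ⊗ₜ[k] 1) = leg12 k B (W.Δ h) := rfl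
    rw [ext12_mul W.comul_mul, W.delta_one₂, this, mul_assoc, ← leg12_mul, comul_one_mul]
  rw [contract, ← ext12_eq, map_id_epsL_ext12]

lemma map_εs_id_comul (h : B) : map W.εs LinearMap.id (W.Δ h) = (1 ⊗ₜ[k] h) * W.Δ 1 := by
  have contract : ∀ t, map W.εs LinearMap.id t =
      map LinearMap.id (epsL k B W.ε) (leg23 k B t * leg12 k B (W.Δ 1)) := by
    intro t
    induction t using TensorProduct.induction_on with
    | zero => simp
    | add a b ha hb => simp only [map_add, add_mul, ha, hb]
    | tmul x y =>
      rw [map_tmul, εs_eq_epsR]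
      induction (W.Δ 1) using TensorProduct.induction_on with
      | zero => simp
      | add a b ha hb => simp only [map_add, mul_add, add_tmul, ha, hb]
      | tmul a b => simp [smul_tmul']
  have ext23_eq :
      ext23 k B W.Δ ((1 ⊗ₜ[k] h) * W.Δ 1) = leg23 k B (W.Δ h) * leg12 k B (W.Δ 1) := by
    rw [ext23_mul W.comul_mul, ← W.coassoc, W.delta_one₂, ← mul_assoc]
    simp only [leg23_apply, ext23_tmul, Algebra.TensorProduct.tmul_mul_tmul, mul_one,
      comul_mul_one]
  rw [contract, ← ext23_eq, map_id_epsL_ext23]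

lemma εt_mul_εs_comm (x y : B) : W.εt x * W.εs y = W.εs y * W.εt x := by
  set φ := W.ε ∘ₗ LinearMap.mulRight k x
  set ψ := W.ε ∘ₗ LinearMap.mulLeft k y
  let χ : B ⊗[k] (B ⊗[k] B) →ₗ[k] B :=
    (TensorProduct.lid k B).toLinearMap ∘ₗ map φ (epsR k B ψ)
  have χ_tmul : ∀ a b c, χ (a ⊗ₜ[k] (b ⊗ₜ[k] c)) = φ a • ψ c • b := fun _ _ _ => rfl
  have χ_leg12_mul_leg23 :
      ∀ t u, χ (leg12 k B t * leg23 k B u) = epsL k B φ t * epsR k B ψ u := by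
    intro t u
    induction t using TensorProduct.induction_on with
    | zero => simp
    | add a b ha hb => simp only [map_add, add_mul, ha, hb]
    | tmul a b =>
      induction u using TensorProduct.induction_on with
      | zero => simp
      | add p q hp hq => simp only [map_add, mul_add, hp, hq]
      | tmul c d => simp [χ_tmul, smul_smul, mul_comm]
  have χ_leg23_mul_leg12 :
      ∀ u t, χ (leg23 k B u * leg12 k B t) = epsR k B ψ u * epsL k B φ t := by
    intro u t
    induction t using TensorProduct.induction_on with
    | zero => simp
    | add a b ha hb => simp only [map_add, mul_add, ha, hb]
    | tmul a b =>
      induction u using TensorProduct.induction_on with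
      | zero => simp
      | add p q hp hq => simp only [map_add, add_mul, hp, hq]
      | tmul c d => simp [χ_tmul, smul_smul, mul_comm]
  rw [εt_eq_epsL, εs_eq_epsR, ← χ_leg12_mul_leg23, ← W.delta_one₁, W.delta_one₂,
    χ_leg23_mul_leg12]

end Counital

section Antipode

lemma mul3_S_id_S_ext23 (t : B ⊗[k] B) :
    mul3 W.S LinearMap.id W.S (ext23 k B W.Δ t) = mul2 k B (map W.S W.εt t) := by
  induction t using TensorProduct.induction_on with
  | zero => simp
  | add a b ha hb => simp [ha, hb]
  | tmul x y => simp only [ext23_tmul, map_tmul, mul2_tmul, ← mul2_map_id_S_comul]; rfl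

lemma mul3_S_id_S_ext12 (t : B ⊗[k] B) :
    mul3 W.S LinearMap.id W.S (ext12 k B W.Δ t) = mul2 k B (map W.εs W.S t) := by
  induction t using TensorProduct.induction_on with
  | zero => simp
  | add a b ha hb => simp [ha, hb]
  | tmul x y => simp [mul3_assoc_tmul, mul2_map_S_id_comul]

lemma mul2_map_S_εt_comul (h : B) : mul2 k B (map W.S W.εt (W.Δ h)) = W.S h := by
  rw [← mul3_S_id_S_ext23]
  exact W.antipode₃ h

lemma mul2_map_εs_S_comul (h : B) : mul2 k B (map W.εs W.S (W.Δ h)) = W.S h := by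
  rw [← mul3_S_id_S_ext12, W.coassoc]
  exact W.antipode₃ h

lemma S_one : W.S 1 = 1 :=
  calc W.S 1 = mul2 k B (map W.S LinearMap.id (map LinearMap.id W.εt (W.Δ 1))) := by
        rw [map_map, LinearMap.comp_id, LinearMap.id_comp, mul2_map_S_εt_comul]
    _ = 1 := by
        rw [map_id_εt_comul, ← Algebra.TensorProduct.one_def, mul_one, mul2_map_S_id_comul,
          εs_one]

lemma εt_εs (y : B) : W.εt (W.εs y) = W.S (W.εs y) := by
  rw [← mul2_map_id_S_comul, comul_εs, ← map_εs_id_comul, map_map, LinearMap.comp_id,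
    LinearMap.id_comp, mul2_map_εs_S_comul]

lemma εs_εt (y : B) : W.εs (W.εt y) = W.S (W.εt y) := by
  rw [← mul2_map_S_id_comul, comul_εt, ← map_id_εt_comul, map_map, LinearMap.comp_id,
    LinearMap.id_comp, mul2_map_S_εt_comul]

lemma εs_εsBar (x : B) : W.εs (W.εsBar x) = W.εsBar x := by
  have εs_epsR : ∀ t, W.εs (epsR k B (W.ε ∘ₗ LinearMap.mulRight k x) t) =
      epsR k B (W.ε ∘ₗ LinearMap.mulRight k x) (map W.εs LinearMap.id t) := by
    intro t
    induction t using TensorProduct.induction_on with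
    | zero => simp
    | add p q hp hq => simp [hp, hq]
    | tmul p q => simp
  rw [εsBar, εs_epsR, map_εs_id_comul, ← Algebra.TensorProduct.one_def, one_mul]

lemma εt_εtBar (x : B) : W.εt (W.εtBar x) = W.εtBar x := by
  have εt_epsL : ∀ t, W.εt (epsL k B (W.ε ∘ₗ LinearMap.mulLeft k x) t) =
      epsL k B (W.ε ∘ₗ LinearMap.mulLeft k x) (map LinearMap.id W.εt t) := by
    intro t
    induction t using TensorProduct.induction_on with
    | zero => simp
    | add p q hp hq => simp [hp, hq]
    | tmul p q => simp
  rw [εtBar, εt_epsL, map_id_εt_comul, ← Algebra.TensorProduct.one_def, mul_one]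

lemma εt_eq_S_εsBar (x : B) : W.εt x = W.S (W.εsBar x) := by
  rw [← εt_εsBar, ← εs_εsBar, εt_εs]

lemma εs_eq_S_εtBar (x : B) : W.εs x = W.S (W.εtBar x) := by
  rw [← εs_εtBar, ← εt_εtBar, εs_εt]

lemma mul2_map_S_εt_mul (u w : B ⊗[k] B) :
    mul2 k B (map W.S W.εt (u * w)) =
      mul3 W.S LinearMap.id W.S (ext23 k B W.Δ u * leg12 k B (map LinearMap.id W.εt w)) := by
  induction w using TensorProduct.induction_on with
  | zero => simp
  | add p q hp hq => simp only [mul_add, map_add, hp, hq]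
  | tmul x y =>
    induction u using TensorProduct.induction_on with
    | zero => simp
    | add p q hp hq => simp only [add_mul, map_add, hp, hq]
    | tmul a b =>
      simp only [Algebra.TensorProduct.tmul_mul_tmul, map_tmul, mul2_tmul, ext23_tmul,
        leg12_tmul, LinearMap.id_coe, id_eq, mul3_tmul_left, εt_mul_eq]

lemma map_id_εt_eq_ext23 (t : B ⊗[k] B) :
    map LinearMap.id W.εt t =
      map LinearMap.id (mul2 k B ∘ₗ map LinearMap.id W.S) (ext23 k B W.Δ t) := by
  rw [ext23, map_map, LinearMap.id_comp,
    show (mul2 k B ∘ₗ map LinearMap.id W.S) ∘ₗ W.Δ = W.εt from LinearMap.ext W.antipode₁]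

lemma mul2_map_S_id_comul_mul (a : B) (w : B ⊗[k] B) :
    mul2 k B (map W.S LinearMap.id
        (W.Δ a * map LinearMap.id (mul2 k B ∘ₗ map LinearMap.id W.S) (ext12 k B W.Δ w))) =
      mul2 k B (map W.εs W.S ((a ⊗ₜ[k] 1) * w)) := by
  induction w using TensorProduct.induction_on with
  | zero => simp
  | add p q hp hq => simp only [map_add, mul_add, hp, hq]
  | tmul x y =>
    rw [ext12_tmul, map_id_mul2_assoc_tmul, ← mul_assoc, ← W.comul_mul, mul2_map_mul_one_tmul,
      mul2_map_S_id_comul]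
    simp

/-- `ε_s(a h₍₁₎) S(h₍₂₎) = S(h₍₁₎) ε_s(a) h₍₂₎ S(h₍₃₎) = S(h₍₁₎) ε_t(h₍₂₎) ε_s(a) = S(h) ε_s(a)`. -/
lemma mul2_map_εs_S_tmul_one_mul_comul (a h : B) :
    mul2 k B (map W.εs W.S ((a ⊗ₜ[k] 1) * W.Δ h)) = W.S h * W.εs a := by
  have expand : ∀ t, mul2 k B (map W.εs W.S ((a ⊗ₜ[k] 1) * t)) =
      mul3 W.S LinearMap.id W.S (leg12 k B (1 ⊗ₜ[k] W.εs a) * ext12 k B W.Δ t) := by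
    intro t
    induction t using TensorProduct.induction_on with
    | zero => simp
    | add p q hp hq => simp only [map_add, mul_add, hp, hq]
    | tmul x y =>
      rw [ext12_tmul, leg12_eq_assoc, ← assoc_mul_tmul_mul, one_mul, mul3_assoc_tmul]
      simp [εs_mul_eq]
  have contract : ∀ t,
      mul3 W.S LinearMap.id W.S (leg12 k B (1 ⊗ₜ[k] W.εs a) * ext23 k B W.Δ t) =
        mul2 k B (map W.S W.εt t) * W.εs a := by
    intro t
    induction t using TensorProduct.induction_on with
    | zero => simp
    | add p q hp hq => simp only [map_add, mul_add, add_mul, hp, hq]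
    | tmul x y =>
      simp only [leg12_tmul, ext23_tmul, Algebra.TensorProduct.tmul_mul_tmul, one_mul,
        mul3_tmul_left, mul2_map_tmul_one_mul, mul2_map_id_S_comul, map_tmul, mul2_tmul,
        ← εt_mul_εs_comm, mul_assoc]
  rw [expand, W.coassoc, contract, mul2_map_S_εt_comul]

lemma mul3_ext12_mul_leg12 (u : B ⊗[k] B) (h : B) :
    mul3 W.S LinearMap.id W.S (ext12 k B W.Δ u *
        leg12 k B (map LinearMap.id (mul2 k B ∘ₗ map LinearMap.id W.S) (ext12 k B W.Δ (W.Δ h)))) =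
      W.S h * mul2 k B (map W.εs W.S u) := by
  induction u using TensorProduct.induction_on with
  | zero => simp
  | add p q hp hq => simp only [map_add, add_mul, mul_add, hp, hq]
  | tmul a b =>
    rw [ext12_tmul, leg12_eq_assoc, ← assoc_mul_tmul_mul, mul_one, mul3_assoc_tmul,
      mul2_map_S_id_comul_mul, mul2_map_εs_S_tmul_one_mul_comul]
    simp [mul_assoc]

/-- In Sweedler notation: `S(gh) = S(g₍₁₎h₍₁₎) ε_t(g₍₂₎h₍₂₎) = S(g₍₁₎h₍₁₎) g₍₂₎ ε_t(h₍₂₎) S(g₍₃₎)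
= S(g₍₁₎h₍₁₎) g₍₂₎h₍₂₎ S(h₍₃₎) S(g₍₃₎) = ε_s(g₍₁₎h₍₁₎) S(h₍₂₎) S(g₍₂₎) = S(h) S(g)`. -/
theorem S_mul (g h : B) : W.S (g * h) = W.S h * W.S g :=
  calc W.S (g * h) = mul2 k B (map W.S W.εt (W.Δ g * W.Δ h)) := by
        rw [← W.comul_mul, mul2_map_S_εt_comul]
    _ = mul3 W.S LinearMap.id W.S (ext12 k B W.Δ (W.Δ g) * leg12 k B
          (map LinearMap.id (mul2 k B ∘ₗ map LinearMap.id W.S) (ext12 k B W.Δ (W.Δ h)))) := by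
        rw [mul2_map_S_εt_mul, map_id_εt_eq_ext23, W.coassoc, W.coassoc]
    _ = W.S h * W.S g := by rw [mul3_ext12_mul_leg12, mul2_map_εs_S_comul]

end Antipode

section TripleProducts

lemma mul2_map_id_εs (t : B ⊗[k] B) :
    mul2 k B (map LinearMap.id W.εs t) = epsR k B W.ε (t * W.Δ 1) := by
  induction t using TensorProduct.induction_on with
  | zero => simp
  | add p q hp hq => simp [add_mul, hp, hq]
  | tmul x y => simp [epsR_tmul_mul, εs_eq_epsR]

lemma mul2_map_εt_id (t : B ⊗[k] B) :
    mul2 k B (map W.εt LinearMap.id t) = epsL k B W.ε (W.Δ 1 * t) := by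
  induction t using TensorProduct.induction_on with
  | zero => simp
  | add p q hp hq => simp [mul_add, hp, hq]
  | tmul x y => simp [epsL_mul_tmul, εt_eq_epsL]

lemma mul2_map_S_εt (t : B ⊗[k] B) :
    mul2 k B (map W.S W.εt t) = W.S (epsR k B W.ε (W.Δ 1 * t)) := by
  induction t using TensorProduct.induction_on with
  | zero => simp
  | add p q hp hq => simp [mul_add, hp, hq]
  | tmul x y => simp [epsR_mul_tmul, εt_eq_S_εsBar, S_mul, εsBar]

lemma mul2_map_εs_S (t : B ⊗[k] B) :
    mul2 k B (map W.εs W.S t) = W.S (epsL k B W.ε (t * W.Δ 1)) := by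
  induction t using TensorProduct.induction_on with
  | zero => simp
  | add p q hp hq => simp [add_mul, hp, hq]
  | tmul x y => simp [epsL_tmul_mul, εs_eq_S_εtBar, S_mul, εtBar]

lemma mul2_map_id_S_mul_mul2_map_S_id (s t : B ⊗[k] B) :
    mul2 k B (map LinearMap.id W.S s) * mul2 k B (map W.S LinearMap.id t) =
      mul3 LinearMap.id W.S LinearMap.id (leg23 k B t * leg12 k B s) := by
  induction s using TensorProduct.induction_on with
  | zero => simp
  | add p q hp hq => simp only [map_add, add_mul, mul_add, hp, hq]
  | tmul a b =>
    induction t using TensorProduct.induction_on with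
    | zero => simp
    | add p q hp hq => simp only [map_add, add_mul, mul_add, hp, hq]
    | tmul x y => simp [S_mul, mul_assoc]

lemma mul2_map_S_id_mul_mul2_map_id_S (t s : B ⊗[k] B) :
    mul2 k B (map W.S LinearMap.id t) * mul2 k B (map LinearMap.id W.S s) =
      mul3 W.S LinearMap.id W.S (leg12 k B t * leg23 k B s) := by
  induction s using TensorProduct.induction_on with
  | zero => simp
  | add p q hp hq => simp only [map_add, mul_add, hp, hq]
  | tmul a b =>
    induction t using TensorProduct.induction_on with
    | zero => simp
    | add p q hp hq => simp only [map_add, add_mul, hp, hq]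
    | tmul x y => simp [mul_assoc]

lemma mul3_id_S_id_tmul_mul_assoc (a y : B) (q p : B ⊗[k] B) :
    mul3 LinearMap.id W.S LinearMap.id ((a ⊗ₜ[k] q) * TensorProduct.assoc k B B B (p ⊗ₜ[k] y)) =
      a * (mul2 k B (map LinearMap.id W.S p) * (mul2 k B (map W.S LinearMap.id q) * y)) := by
  induction p using TensorProduct.induction_on with
  | zero => simp
  | add p₁ p₂ h₁ h₂ => simp only [add_tmul, map_add, mul_add, add_mul, h₁, h₂]
  | tmul p₁ p₂ =>
    induction q using TensorProduct.induction_on with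
    | zero => simp
    | add q₁ q₂ h₁ h₂ => simp only [tmul_add, map_add, add_mul, mul_add, h₁, h₂]
    | tmul q₁ q₂ => simp [S_mul, mul_assoc]

lemma mul3_S_id_S_assoc_mul_tmul (x b : B) (p q : B ⊗[k] B) :
    mul3 W.S LinearMap.id W.S (TensorProduct.assoc k B B B (p ⊗ₜ[k] b) * (x ⊗ₜ[k] q)) =
      W.S x * (mul2 k B (map W.S LinearMap.id p) * (mul2 k B (map LinearMap.id W.S q) * W.S b)) := by
  induction p using TensorProduct.induction_on with
  | zero => simp
  | add p₁ p₂ h₁ h₂ => simp only [add_tmul, map_add, mul_add, add_mul, h₁, h₂]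
  | tmul p₁ p₂ =>
    induction q using TensorProduct.induction_on with
    | zero => simp
    | add q₁ q₂ h₁ h₂ => simp only [tmul_add, map_add, add_mul, mul_add, h₁, h₂]
    | tmul q₁ q₂ => simp [S_mul, mul_assoc]

lemma mul3_id_S_id_ext23_mul_ext12 (s t : B ⊗[k] B) :
    mul3 LinearMap.id W.S LinearMap.id (ext23 k B W.Δ s * ext12 k B W.Δ t) =
      mul2 k B (map LinearMap.id W.εs s) * mul2 k B (map W.εt LinearMap.id t) := by
  induction s using TensorProduct.induction_on with
  | zero => simp
  | add p q hp hq => simp only [map_add, add_mul, hp, hq]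
  | tmul a b =>
    induction t using TensorProduct.induction_on with
    | zero => simp
    | add p q hp hq => simp only [map_add, mul_add, hp, hq]
    | tmul x y =>
      rw [ext23_tmul, ext12_tmul, mul3_id_S_id_tmul_mul_assoc, mul2_map_id_S_comul,
        mul2_map_S_id_comul]
      simp only [map_tmul, mul2_tmul, LinearMap.id_coe, id_eq, ← mul_assoc, εt_mul_εs_comm]

lemma mul3_S_id_S_ext12_mul_ext23 (s t : B ⊗[k] B) :
    mul3 W.S LinearMap.id W.S (ext12 k B W.Δ s * ext23 k B W.Δ t) =
      mul2 k B (map W.S W.εt t) * mul2 k B (map W.εs W.S s) := by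
  induction s using TensorProduct.induction_on with
  | zero => simp
  | add p q hp hq => simp only [map_add, add_mul, mul_add, hp, hq]
  | tmul a b =>
    induction t using TensorProduct.induction_on with
    | zero => simp
    | add p q hp hq => simp only [map_add, mul_add, add_mul, hp, hq]
    | tmul x y =>
      rw [ext23_tmul, ext12_tmul, mul3_S_id_S_assoc_mul_tmul, mul2_map_id_S_comul,
        mul2_map_S_id_comul]
      simp only [map_tmul, mul2_tmul, ← mul_assoc]
      rw [mul_assoc (W.S x), ← εt_mul_εs_comm, ← mul_assoc]

end TripleProducts

end WeakHopf

namespace Twist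

variable {W : WeakHopf k B} (T : Twist k B W)

def v : B := mul2 k B (map W.S LinearMap.id T.Θ)

def vInv : B := mul2 k B (map LinearMap.id W.S T.Θbar)

theorem vInv_mul_v : T.vInv * T.v = 1 := by
  rw [vInv, v, W.mul2_map_id_S_mul_mul2_map_S_id, ← T.cocycle₄, W.mul3_id_S_id_ext23_mul_ext12,
    W.mul2_map_id_εs, W.mul2_map_εt_id, ← T.idem_right, ← T.idem_left, T.counit₄, T.counit₁,
    one_mul]

theorem v_mul_vInv : T.v * T.vInv = 1 := by
  rw [vInv, v, W.mul2_map_S_id_mul_mul2_map_id_S, ← T.cocycle₃, W.mul3_S_id_S_ext12_mul_ext23,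
    W.mul2_map_S_εt, W.mul2_map_εs_S, ← T.idem_left, ← T.idem_right, T.counit₂, T.counit₃,
    W.S_one, one_mul]

end Twist

end WHA

/-- for a twist `(Θ, Θ̄)` of a weak Hopf algebra, `v = S(Θ⁽¹⁾)Θ⁽²⁾` is
invertible with inverse `Θ̄⁽¹⁾S(Θ̄⁽²⁾)`. -/
theorem twist_v_invertible
    (k B : Type*) [Field k] [Ring B] [Algebra k B]
    (W : WHA.WeakHopf k B) (T : WHA.Twist k B W) :
    WHA.mul2 k B (TensorProduct.map LinearMap.id W.S T.Θbar) *
        WHA.mul2 k B (TensorProduct.map W.S LinearMap.id T.Θ) = 1 ∧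
      WHA.mul2 k B (TensorProduct.map W.S LinearMap.id T.Θ) *
        WHA.mul2 k B (TensorProduct.map LinearMap.id W.S T.Θbar) = 1 :=
  ⟨T.vInv_mul_v, T.v_mul_vInv⟩
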